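/- Let f_{α,β} be the Beta(α,β) density with α,β > 0, and let ΔQ_{n,k} = ∫_{(k−1)/n}^{k/n} f_{α,β}(x) dx for n ≥ 1 and integers 1 ≤ k ≤ n. Then ΔQ_{n,k} = n^{-1} f_{α,β}(k/n)(1 + O(1/k) + O(1/(n−k))) for 1 ≤ k ≤ n−1, and there is a constant C such that ΔQ_{n,1} ≤ C n^{-α}. -/

import Mathlib

/-- The Beta(α,β) density on `(0,1)`. -/
noncomputable def betaDen (α β x : ℝ) : ℝ :=
  (Real.Gamma (α + β) / (Real.Gamma α * Real.Gamma β)) * x ^ (α - 1) * (1 - x) ^ (β - 1)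

open MeasureTheory Set

section Helpers

variable {α β : ℝ}

lemma rpow_between {a b x : ℝ} (ha : 0 < a) (hax : a ≤ x) (hxb : x ≤ b) (s : ℝ) :
    min (a ^ s) (b ^ s) ≤ x ^ s ∧ x ^ s ≤ max (a ^ s) (b ^ s) := by
  rcases le_or_gt 0 s with hs | hs
  · exact ⟨(min_le_left _ _).trans (Real.rpow_le_rpow ha.le hax hs),
      (Real.rpow_le_rpow (ha.le.trans hax) hxb hs).trans (le_max_right _ _)⟩
  · exact ⟨(min_le_right _ _).trans (Real.rpow_le_rpow_of_nonpos (ha.trans_le hax) hxb hs.le),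
      (Real.rpow_le_rpow_of_nonpos ha hax hs.le).trans (le_max_left _ _)⟩

lemma one_add_rpow_le {u t : ℝ} (hu : 0 ≤ u) (ht0 : 0 ≤ t) (ht1 : t ≤ 1) :
    (1 + t) ^ u ≤ 1 + u * Real.exp u * t := by
  have h1 : (1 + t) ^ u ≤ Real.exp (u * t) := by
    rw [Real.rpow_def_of_pos (by linarith)]
    apply Real.exp_le_exp.2
    have := Real.log_le_sub_one_of_pos (x := 1 + t) (by linarith)
    nlinarith
  have h3 := Real.add_one_le_exp (-(u * t))
  rw [Real.exp_neg] at h3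
  have h4 := Real.exp_pos (u * t)
  have h2 : Real.exp (u * t) ≤ 1 + u * t * Real.exp (u * t) := by
    have h6 := mul_le_mul_of_nonneg_right h3 h4.le
    rw [inv_mul_cancel₀ h4.ne'] at h6
    nlinarith
  have h5 : Real.exp (u * t) ≤ Real.exp u := Real.exp_le_exp.2 (by nlinarith)
  nlinarith [mul_nonneg hu ht0]

lemma rpow_max_le {a b : ℝ} (ha : 0 < a) (hab : a ≤ b) (s : ℝ) :
    max (a ^ s) (b ^ s) ≤ (b / a) ^ |s| * min (a ^ s) (b ^ s) := by
  have hb : 0 < b := ha.trans_le hab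
  rcases le_or_gt 0 s with hs | hs
  · rw [abs_of_nonneg hs, max_eq_right (Real.rpow_le_rpow ha.le hab hs),
      min_eq_left (Real.rpow_le_rpow ha.le hab hs), Real.div_rpow hb.le ha.le,
      div_mul_cancel₀ _ (Real.rpow_pos_of_pos ha s).ne']
  · rw [abs_of_neg hs, max_eq_left (Real.rpow_le_rpow_of_nonpos ha hab hs.le),
      min_eq_right (Real.rpow_le_rpow_of_nonpos ha hab hs.le)]
    have h1 : (b / a) ^ (-s) = a ^ s / b ^ s := by
      rw [Real.rpow_neg (by positivity), Real.div_rpow hb.le ha.le, inv_div]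
    rw [h1, div_mul_cancel₀ _ (Real.rpow_pos_of_pos hb s).ne']

lemma rpow_diff_le {a b : ℝ} (ha : 0 < a) (hab : a ≤ b) (hb2 : b ≤ 2 * a) (s : ℝ) :
    max (a ^ s) (b ^ s) - min (a ^ s) (b ^ s)
      ≤ (|s| * Real.exp |s|) * (b / a - 1) * min (a ^ s) (b ^ s) := by
  have ht0 : 0 ≤ b / a - 1 := by
    rw [sub_nonneg, le_div_iff₀ ha]; linarith
  have ht1 : b / a - 1 ≤ 1 := by
    rw [sub_le_iff_le_add, div_le_iff₀ ha]; linarith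
  have h1 := rpow_max_le ha hab s
  have h2 := one_add_rpow_le (abs_nonneg s) ht0 ht1
  have e : 1 + (b / a - 1) = b / a := by ring
  rw [e] at h2
  have hmin : 0 ≤ min (a ^ s) (b ^ s) :=
    le_min (Real.rpow_nonneg ha.le s) (Real.rpow_nonneg (ha.trans_le hab).le s)
  nlinarith

lemma half_rpow {y : ℝ} (h1 : 1 / 2 ≤ y) (h2 : y ≤ 1) (s : ℝ) :
    (2:ℝ) ^ (-|s|) ≤ y ^ s ∧ y ^ s ≤ 2 ^ |s| := by
  have h := rpow_between (a := 1/2) (b := 1) (by norm_num) h1 h2 s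
  have e : ((1:ℝ)/2) ^ s = 2 ^ (-s) := by
    rw [Real.rpow_neg (by norm_num), one_div, Real.inv_rpow (by norm_num)]
  rw [e, Real.one_rpow] at h
  have l1 : (2:ℝ) ^ (-s) ≤ 2 ^ |s| := Real.rpow_le_rpow_of_exponent_le one_le_two (neg_le_abs s)
  have l2 : (1:ℝ) ≤ 2 ^ |s| := Real.one_le_rpow one_le_two (abs_nonneg s)
  have l3 : (2:ℝ) ^ (-|s|) ≤ 2 ^ (-s) :=
    Real.rpow_le_rpow_of_exponent_le one_le_two (neg_le_neg (le_abs_self s))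
  have l4 : (2:ℝ) ^ (-|s|) ≤ 1 := by
    calc (2:ℝ) ^ (-|s|) ≤ 2 ^ (0:ℝ) := Real.rpow_le_rpow_of_exponent_le one_le_two (by simp)
    _ = 1 := Real.rpow_zero 2
  exact ⟨le_trans (le_min l3 l4) h.1, le_trans h.2 (max_le l1 l2)⟩

lemma gammaC_pos (hα : 0 < α) (hβ : 0 < β) :
    0 < Real.Gamma (α + β) / (Real.Gamma α * Real.Gamma β) :=
  div_pos (Real.Gamma_pos_of_pos (by linarith))
    (mul_pos (Real.Gamma_pos_of_pos hα) (Real.Gamma_pos_of_pos hβ))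

lemma betaDen_nonneg (hα : 0 < α) (hβ : 0 < β) {x : ℝ} (h0 : 0 ≤ x) (h1 : x ≤ 1) :
    0 ≤ betaDen α β x :=
  mul_nonneg (mul_nonneg (gammaC_pos hα hβ).le (Real.rpow_nonneg h0 _))
    (Real.rpow_nonneg (by linarith) _)

lemma betaDen_contOn {a b : ℝ} (ha : 0 < a) (hb : b < 1) :
    ContinuousOn (betaDen α β) (Set.Icc a b) := by
  unfold betaDen
  apply ContinuousOn.mul
  · apply ContinuousOn.mul continuousOn_const
    exact continuousOn_id.rpow_const fun x hx =>
      Or.inl (ne_of_gt (lt_of_lt_of_le ha hx.1))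
  · exact (continuousOn_const.sub continuousOn_id).rpow_const fun x hx =>
      Or.inl (ne_of_gt (by have := hx.2; dsimp; linarith))

lemma betaDen_symm (α β x : ℝ) : betaDen α β x = betaDen β α (1 - x) := by
  unfold betaDen
  rw [sub_sub_cancel, add_comm β α]
  ring

lemma betaDen_le_left (hα : 0 < α) (hβ : 0 < β) {x : ℝ}
    (hx0 : 0 ≤ x) (hx : x ≤ 1/2) :
    betaDen α β x ≤
      (Real.Gamma (α + β) / (Real.Gamma α * Real.Gamma β)) * 2 ^ |β - 1| * x ^ (α - 1) := by
  have hc := (gammaC_pos hα hβ).le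
  have hQ := (half_rpow (by linarith : 1/2 ≤ 1 - x) (by linarith) (β - 1)).2
  unfold betaDen
  calc Real.Gamma (α + β) / (Real.Gamma α * Real.Gamma β) * x ^ (α-1) * (1-x) ^ (β-1)
      ≤ Real.Gamma (α + β) / (Real.Gamma α * Real.Gamma β) * x ^ (α-1) * 2 ^ |β-1| :=
        mul_le_mul_of_nonneg_left hQ (mul_nonneg hc (Real.rpow_nonneg hx0 _))
    _ = _ := by ring

lemma betaDen_intble_left (hα : 0 < α) (hβ : 0 < β) {t : ℝ} (ht0 : 0 < t) (ht : t ≤ 1/2) :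
    IntervalIntegrable (betaDen α β) volume 0 t := by
  have hg : IntervalIntegrable
      (fun x : ℝ => (Real.Gamma (α + β) / (Real.Gamma α * Real.Gamma β) * 2 ^ |β - 1|)
        * x ^ (α - 1)) volume 0 t :=
    (intervalIntegral.intervalIntegrable_rpow' (by linarith)).const_mul _
  apply hg.mono_fun
  · exact ((by unfold betaDen; fun_prop : Measurable (betaDen α β))).aestronglyMeasurable
  · rw [uIoc_of_le ht0.le]
    filter_upwards [ae_restrict_mem measurableSet_Ioc] with x hx
    have hx0 : 0 ≤ x := hx.1.le
    have hx2 : x ≤ 1/2 := hx.2.trans ht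
    have h1 := betaDen_le_left hα hβ hx0 hx2
    have h2 := betaDen_nonneg hα hβ hx0 (by linarith)
    rw [Real.norm_of_nonneg h2, Real.norm_of_nonneg (by positivity)]
    calc betaDen α β x ≤ _ := h1
      _ = _ := by ring

lemma betaDen_int_left (hα : 0 < α) (hβ : 0 < β) {t : ℝ} (ht0 : 0 < t) (ht : t ≤ 1/2) :
    ∫ x in (0:ℝ)..t, betaDen α β x ≤
      (Real.Gamma (α + β) / (Real.Gamma α * Real.Gamma β)) * 2 ^ |β - 1| / α * t ^ α := by
  have hg : IntervalIntegrable
      (fun x : ℝ => (Real.Gamma (α + β) / (Real.Gamma α * Real.Gamma β) * 2 ^ |β - 1|)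
        * x ^ (α - 1)) volume 0 t :=
    (intervalIntegral.intervalIntegrable_rpow' (by linarith)).const_mul _
  have key : (∫ x in (0:ℝ)..t, betaDen α β x) ≤
      ∫ x in (0:ℝ)..t, (Real.Gamma (α + β) / (Real.Gamma α * Real.Gamma β) * 2 ^ |β - 1|)
        * x ^ (α - 1) := by
    apply intervalIntegral.integral_mono_on ht0.le (betaDen_intble_left hα hβ ht0 ht) hg
    intro x hx
    calc betaDen α β x ≤ _ := betaDen_le_left hα hβ hx.1 (hx.2.trans ht)
      _ = _ := by ring
  refine key.trans ?_
  rw [intervalIntegral.integral_const_mul, integral_rpow (Or.inl (by linarith))]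
  rw [Real.zero_rpow (by linarith : α - 1 + 1 ≠ 0)]
  have e : α - 1 + 1 = α := by ring
  rw [e]
  ring_nf
  exact le_of_eq (by ring)

lemma interior_est (hα : 0 < α) (hβ : 0 < β) {a b : ℝ}
    (ha : 0 < a) (hab : a ≤ b) (hb : b < 1) (hb2 : b ≤ 2 * a) (h1a : 1 - a ≤ 2 * (1 - b)) :
    |(∫ x in a..b, betaDen α β x) - (b - a) * betaDen α β b| ≤
      (b - a) * betaDen α β b *
        ((|α - 1| * Real.exp |α - 1|) * (1 + |β - 1| * Real.exp |β - 1|) * (b / a - 1)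
          + (|β - 1| * Real.exp |β - 1|) * ((1 - a) / (1 - b) - 1)) := by
  have h1b : 0 < 1 - b := by linarith
  have hc := gammaC_pos hα hβ
  set c := Real.Gamma (α + β) / (Real.Gamma α * Real.Gamma β) with hcdef
  set Kα := |α - 1| * Real.exp |α - 1| with hKαdef
  set Kβ := |β - 1| * Real.exp |β - 1| with hKβdef
  have hKα : 0 ≤ Kα := mul_nonneg (abs_nonneg _) (Real.exp_pos _).le
  have hKβ : 0 ≤ Kβ := mul_nonneg (abs_nonneg _) (Real.exp_pos _).le
  set t1 := b / a - 1 with ht1def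
  set t2 := (1 - a) / (1 - b) - 1 with ht2def
  have ht1 : 0 ≤ t1 := by rw [ht1def, sub_nonneg, le_div_iff₀ ha]; linarith
  have ht2 : 0 ≤ t2 := by rw [ht2def, sub_nonneg, le_div_iff₀ h1b]; linarith
  have ht3 : t2 ≤ 1 := by rw [ht2def, sub_le_iff_le_add, div_le_iff₀ h1b]; linarith
  set Pmin := min (a ^ (α - 1)) (b ^ (α - 1)) with hPmindef
  set Pmax := max (a ^ (α - 1)) (b ^ (α - 1)) with hPmaxdef
  set Qmin := min ((1 - b) ^ (β - 1)) ((1 - a) ^ (β - 1)) with hQmindef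
  set Qmax := max ((1 - b) ^ (β - 1)) ((1 - a) ^ (β - 1)) with hQmaxdef
  have hPmin0 : 0 ≤ Pmin :=
    le_min (Real.rpow_nonneg ha.le _) (Real.rpow_nonneg (ha.trans_le hab).le _)
  have hQmin0 : 0 ≤ Qmin :=
    le_min (Real.rpow_nonneg h1b.le _) (Real.rpow_nonneg (by linarith) _)
  have hPmax0 : 0 ≤ Pmax := hPmin0.trans min_le_max
  have hQmax0 : 0 ≤ Qmax := hQmin0.trans min_le_max
  have point : ∀ x ∈ Icc a b,
      c * Pmin * Qmin ≤ betaDen α β x ∧ betaDen α β x ≤ c * Pmax * Qmax := by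
    intro x hx
    have hp := rpow_between ha hx.1 hx.2 (α - 1)
    have hq := rpow_between h1b (by linarith [hx.2] : 1 - b ≤ 1 - x)
      (by linarith [hx.1] : 1 - x ≤ 1 - a) (β - 1)
    have hx0 : 0 ≤ x := (ha.trans_le hx.1).le
    have hbd : betaDen α β x = c * x ^ (α - 1) * (1 - x) ^ (β - 1) := by
      rw [betaDen, ← hcdef]
    rw [hbd]
    constructor
    · calc c * Pmin * Qmin ≤ c * x ^ (α - 1) * Qmin :=
            mul_le_mul_of_nonneg_right (mul_le_mul_of_nonneg_left hp.1 hc.le) hQmin0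
        _ ≤ c * x ^ (α - 1) * (1 - x) ^ (β - 1) :=
            mul_le_mul_of_nonneg_left hq.1 (mul_nonneg hc.le (Real.rpow_nonneg hx0 _))
    · calc c * x ^ (α - 1) * (1 - x) ^ (β - 1) ≤ c * x ^ (α - 1) * Qmax :=
            mul_le_mul_of_nonneg_left hq.2 (mul_nonneg hc.le (Real.rpow_nonneg hx0 _))
        _ ≤ c * Pmax * Qmax :=
            mul_le_mul_of_nonneg_right (mul_le_mul_of_nonneg_left hp.2 hc.le) hQmax0
  have hii : IntervalIntegrable (betaDen α β) volume a b := by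
    apply ContinuousOn.intervalIntegrable
    rw [uIcc_of_le hab]
    exact betaDen_contOn ha hb
  have hlow : (b - a) * (c * Pmin * Qmin) ≤ ∫ x in a..b, betaDen α β x := by
    have h := intervalIntegral.integral_mono_on hab intervalIntegrable_const hii
      (fun x hx => (point x hx).1)
    rw [intervalIntegral.integral_const, smul_eq_mul] at h
    exact h
  have hup : (∫ x in a..b, betaDen α β x) ≤ (b - a) * (c * Pmax * Qmax) := by
    have h := intervalIntegral.integral_mono_on hab hii intervalIntegrable_const
      (fun x hx => (point x hx).2)
    rw [intervalIntegral.integral_const, smul_eq_mul] at h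
    exact h
  have hfb := point b ⟨hab, le_refl b⟩
  have hba0 : (0:ℝ) ≤ b - a := by linarith
  have m1 : (b - a) * betaDen α β b ≤ (b - a) * (c * Pmax * Qmax) :=
    mul_le_mul_of_nonneg_left hfb.2 hba0
  have m2 : (b - a) * (c * Pmin * Qmin) ≤ (b - a) * betaDen α β b :=
    mul_le_mul_of_nonneg_left hfb.1 hba0
  have habs : |(∫ x in a..b, betaDen α β x) - (b - a) * betaDen α β b| ≤
      (b - a) * (c * (Pmax * Qmax - Pmin * Qmin)) := by
    rw [abs_le]
    constructor <;> linarith only [hlow, hup, m1, m2]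
  have hd1 := rpow_diff_le ha hab hb2 (α - 1)
  have hd2 := rpow_diff_le h1b (by linarith : 1 - b ≤ 1 - a) (by linarith) (β - 1)
  rw [← hPmindef, ← hPmaxdef, ← hKαdef, ← ht1def] at hd1
  rw [← hQmindef, ← hQmaxdef, ← hKβdef, ← ht2def] at hd2
  have hqm : Qmax ≤ (1 + Kβ) * Qmin := by
    have haux : Kβ * Qmin * t2 ≤ Kβ * Qmin * 1 :=
      mul_le_mul_of_nonneg_left ht3 (mul_nonneg hKβ hQmin0)
    nlinarith [hd2, haux]
  have e1 : (Pmax - Pmin) * Qmax ≤ (Kα * t1 * Pmin) * ((1 + Kβ) * Qmin) :=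
    mul_le_mul hd1 hqm hQmax0 (by positivity)
  have e2 : Pmin * (Qmax - Qmin) ≤ Pmin * (Kβ * t2 * Qmin) :=
    mul_le_mul_of_nonneg_left hd2 hPmin0
  have key : Pmax * Qmax - Pmin * Qmin ≤ (Kα * (1 + Kβ) * t1 + Kβ * t2) * (Pmin * Qmin) := by
    linarith only [e1, e2]
  have coeff0 : 0 ≤ Kα * (1 + Kβ) * t1 + Kβ * t2 := by positivity
  calc |(∫ x in a..b, betaDen α β x) - (b - a) * betaDen α β b| ≤
        (b - a) * (c * (Pmax * Qmax - Pmin * Qmin)) := habs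
    _ ≤ (b - a) * ((Kα * (1 + Kβ) * t1 + Kβ * t2) * (c * Pmin * Qmin)) := by
        apply mul_le_mul_of_nonneg_left _ hba0
        calc c * (Pmax * Qmax - Pmin * Qmin)
            ≤ c * ((Kα * (1 + Kβ) * t1 + Kβ * t2) * (Pmin * Qmin)) :=
              mul_le_mul_of_nonneg_left key hc.le
          _ = (Kα * (1 + Kβ) * t1 + Kβ * t2) * (c * Pmin * Qmin) := by ring
    _ ≤ (b - a) * ((Kα * (1 + Kβ) * t1 + Kβ * t2) * betaDen α β b) := by
        apply mul_le_mul_of_nonneg_left _ hba0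
        exact mul_le_mul_of_nonneg_left hfb.1 coeff0
    _ = (b - a) * betaDen α β b * (Kα * (1 + Kβ) * t1 + Kβ * t2) := by ring

end Helpers

set_option maxHeartbeats 1000000 in
/-- Increment estimates for the Beta(α,β) distribution function:
`ΔQ_{n,k} = ∫_{(k−1)/n}^{k/n} f_{α,β} = n⁻¹ f_{α,β}(k/n)(1 + O(1/k) + O(1/(n−k)))`
for `1 ≤ k ≤ n − 1`, and `ΔQ_{n,1} ≤ C n^{−α}`. -/
theorem beta_increment_estimates (α β : ℝ) (hα : 0 < α) (hβ : 0 < β) :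
    ∃ C : ℝ,
      (∀ n : ℕ, 1 ≤ n → ∀ k : ℕ, 1 ≤ k → k ≤ n - 1 →
        |(∫ x in (((k : ℝ) - 1) / n)..((k : ℝ) / n), betaDen α β x) -
            (n : ℝ)⁻¹ * betaDen α β (k / n)| ≤
          C * (n : ℝ)⁻¹ * betaDen α β (k / n) * (1 / k + 1 / ((n : ℝ) - k))) ∧
      (∀ n : ℕ, 1 ≤ n →
        (∫ x in (0 : ℝ)..(1 / n), betaDen α β x) ≤ C * (n : ℝ) ^ (-α)) := by
  have hc := gammaC_pos hα hβ
  have hc' := gammaC_pos hβ hα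
  set c := Real.Gamma (α + β) / (Real.Gamma α * Real.Gamma β) with hcdef
  set Kα := |α - 1| * Real.exp |α - 1| with hKαdef
  set Kβ := |β - 1| * Real.exp |β - 1| with hKβdef
  have hKα : 0 ≤ Kα := mul_nonneg (abs_nonneg _) (Real.exp_pos _).le
  have hKβ : 0 ≤ Kβ := mul_nonneg (abs_nonneg _) (Real.exp_pos _).le
  set Q := (2:ℝ) ^ |β - 1| with hQdef
  set P := (2:ℝ) ^ |α - 1| with hPdef
  have hQ0 : 0 < Q := Real.rpow_pos_of_pos two_pos _
  have hP0 : 0 < P := Real.rpow_pos_of_pos two_pos _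
  set A := 2 * Kα * (1 + Kβ) + Kβ with hAdef
  set B := Q * Q / α + 1 with hBdef
  set D := c * Q / α with hDdef
  set E := c * Q / α * (1/2:ℝ) ^ α
    + Real.Gamma (β + α) / (Real.Gamma β * Real.Gamma α) * P / β * (1/2:ℝ) ^ β with hEdef
  have hA0 : 0 ≤ A := by positivity
  have hB0 : 0 ≤ B := by positivity
  have hD0 : 0 ≤ D := by positivity
  have hE0 : 0 ≤ E := by
    have h1 : (0:ℝ) < (1/2:ℝ) ^ α := Real.rpow_pos_of_pos (by norm_num) _
    have h2 : (0:ℝ) < (1/2:ℝ) ^ β := Real.rpow_pos_of_pos (by norm_num) _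
    have h3 := hc'.le
    positivity
  refine ⟨A + B + D + E, ?_, ?_⟩
  · -- first bullet
    intro n hn k hk1 hkn1
    have hkn : k + 1 ≤ n := by omega
    have hn1 : (1:ℝ) ≤ n := by exact_mod_cast hn
    have hn0 : (0:ℝ) < n := by linarith
    have hk1' : (1:ℝ) ≤ k := by exact_mod_cast hk1
    have hknR : (k:ℝ) + 1 ≤ n := by exact_mod_cast hkn
    have hfk0 : 0 ≤ betaDen α β ((k:ℝ) / n) :=
      betaDen_nonneg hα hβ (by positivity) (by rw [div_le_one hn0]; linarith)
    have hinvk : 0 < 1 / (k:ℝ) := by positivity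
    have hinvnk : 0 < 1 / ((n:ℝ) - k) := div_pos one_pos (by linarith)
    rcases eq_or_lt_of_le hk1 with hk | hk
    · -- k = 1
      subst hk
      simp only [Nat.cast_one] at hfk0 ⊢
      have e0 : ((1:ℝ) - 1) / (n:ℝ) = 0 := by norm_num
      rw [e0]
      have hn2 : (2:ℝ) ≤ n := by linarith
      have ht0 : 0 < 1 / (n:ℝ) := by positivity
      have ht : 1 / (n:ℝ) ≤ 1/2 := by rw [div_le_div_iff₀ hn0 two_pos]; linarith
      have hI0 : 0 ≤ ∫ x in (0:ℝ)..(1/(n:ℝ)), betaDen α β x := by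
        apply intervalIntegral.integral_nonneg ht0.le
        intro x hx
        exact betaDen_nonneg hα hβ hx.1 (by linarith [hx.2])
      have hIle := betaDen_int_left hα hβ ht0 ht
      rw [← hcdef, ← hQdef] at hIle
      have hpow : ((1:ℝ)/(n:ℝ)) ^ α = (n:ℝ) ^ (-α) := by
        rw [one_div, Real.inv_rpow hn0.le, ← Real.rpow_neg hn0.le]
      rw [hpow] at hIle
      have hexp : (n:ℝ) ^ (-α) = (n:ℝ) ^ (-(α-1)) * (n:ℝ)⁻¹ := by
        rw [← Real.rpow_neg_one (n:ℝ), ← Real.rpow_add hn0]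
        congr 1
        ring
      have hfn : (n:ℝ)⁻¹ * betaDen α β (1/(n:ℝ)) =
          c * (n:ℝ) ^ (-α) * (1 - 1/(n:ℝ)) ^ (β-1) := by
        rw [betaDen, ← hcdef, one_div, Real.inv_rpow hn0.le, ← Real.rpow_neg hn0.le, hexp]
        ring
      have hQb : Q⁻¹ ≤ (1 - 1/(n:ℝ)) ^ (β-1) := by
        have h := (half_rpow (by linarith : (1:ℝ)/2 ≤ 1 - 1/(n:ℝ))
          (by linarith : 1 - 1/(n:ℝ) ≤ 1) (β-1)).1
        rwa [Real.rpow_neg (by norm_num : (0:ℝ) ≤ 2), ← hQdef] at h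
      have hna : (0:ℝ) < (n:ℝ) ^ (-α) := Real.rpow_pos_of_pos hn0 _
      have hF : c * (n:ℝ) ^ (-α) ≤ Q * ((n:ℝ)⁻¹ * betaDen α β (1/(n:ℝ))) := by
        rw [hfn]
        calc c * (n:ℝ) ^ (-α) = Q * (c * (n:ℝ) ^ (-α) * Q⁻¹) := by
              field_simp
            _ ≤ Q * (c * (n:ℝ) ^ (-α) * (1 - 1/(n:ℝ)) ^ (β-1)) := by
              apply mul_le_mul_of_nonneg_left _ hQ0.le
              exact mul_le_mul_of_nonneg_left hQb (by positivity)
      set G := (n:ℝ)⁻¹ * betaDen α β (1/(n:ℝ)) with hGdef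
      have hG0 : 0 ≤ G := mul_nonneg (by positivity) hfk0
      have hIB : (∫ x in (0:ℝ)..(1/(n:ℝ)), betaDen α β x) ≤ Q * Q / α * G := by
        calc (∫ x in (0:ℝ)..(1/(n:ℝ)), betaDen α β x) ≤ c * Q / α * (n:ℝ) ^ (-α) := hIle
          _ = Q / α * (c * (n:ℝ) ^ (-α)) := by ring
          _ ≤ Q / α * (Q * G) := mul_le_mul_of_nonneg_left hF (by positivity)
          _ = Q * Q / α * G := by ring
      have habs : |(∫ x in (0:ℝ)..(1/(n:ℝ)), betaDen α β x) - G| ≤ B * G := by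
        rw [abs_le, hBdef]
        constructor <;> linarith only [hIB, hI0, hG0]
      have hR1 : (1:ℝ) ≤ 1/(1:ℝ) + 1/((n:ℝ) - 1) := by
        have h4 : (0:ℝ) ≤ 1/((n:ℝ)-1) := div_nonneg one_pos.le (by linarith)
        rw [one_div_one]
        linarith
      calc |(∫ x in (0:ℝ)..(1/(n:ℝ)), betaDen α β x) - G| ≤ B * G := habs
        _ ≤ (A + B + D + E) * G := mul_le_mul_of_nonneg_right (by linarith) hG0
        _ ≤ (A + B + D + E) * G * (1/(1:ℝ) + 1/((n:ℝ) - 1)) :=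
            le_mul_of_one_le_right (mul_nonneg (by linarith) hG0) hR1
        _ = (A + B + D + E) * (n:ℝ)⁻¹ * betaDen α β (1/(n:ℝ)) * (1/(1:ℝ) + 1/((n:ℝ) - 1)) := by
            rw [hGdef]; ring
    · -- k ≥ 2
      have hk2 : (2:ℝ) ≤ k := by exact_mod_cast hk
      have hnne : (n:ℝ) ≠ 0 := hn0.ne'
      have hk1ne : (k:ℝ) - 1 ≠ 0 := by intro h; nlinarith
      have hinv0 : (0:ℝ) ≤ (n:ℝ)⁻¹ := by positivity
      have ha0 : 0 < ((k:ℝ)-1)/n := div_pos (by linarith) hn0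
      have hab : ((k:ℝ)-1)/n ≤ (k:ℝ)/n := by gcongr <;> linarith
      have hb1 : (k:ℝ)/n < 1 := by rw [div_lt_one hn0]; linarith
      have hb2 : (k:ℝ)/n ≤ 2 * (((k:ℝ)-1)/n) := by
        have h5 : (0:ℝ) ≤ ((k:ℝ)-2) * (n:ℝ)⁻¹ := mul_nonneg (by linarith) hinv0
        have e1 : 2 * (((k:ℝ)-1)/n) = (k:ℝ)/n + ((k:ℝ)-2) * (n:ℝ)⁻¹ := by ring
        linarith
      have h1a : 1 - ((k:ℝ)-1)/n ≤ 2 * (1 - (k:ℝ)/n) := by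
        have h6 : ((k:ℝ)+1)/n ≤ 1 := (div_le_one hn0).2 hknR
        have e1 : 2 * (1 - (k:ℝ)/n) - (1 - ((k:ℝ)-1)/n) = 1 - ((k:ℝ)+1)/n := by ring
        linarith
      have key := interior_est hα hβ ha0 hab hb1 hb2 h1a
      rw [← hKαdef, ← hKβdef] at key
      have hba : (k:ℝ)/n - ((k:ℝ)-1)/n = (n:ℝ)⁻¹ := by ring
      rw [hba] at key
      have hnk0 : (0:ℝ) < (n:ℝ) - k := by linarith
      have h1mb : (0:ℝ) < 1 - (k:ℝ)/n := by linarith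
      have ht2b : (1 - ((k:ℝ)-1)/n) / (1 - (k:ℝ)/n) - 1 = 1/((n:ℝ) - k) := by
        rw [div_sub_one h1mb.ne', div_eq_div_iff h1mb.ne' hnk0.ne']
        field_simp
        ring
      rw [ht2b] at key
      have ht1b : ((k:ℝ)/n) / (((k:ℝ)-1)/n) - 1 ≤ 2 * (1/(k:ℝ)) := by
        have hba2 : ((k:ℝ)/n) / (((k:ℝ)-1)/n) = (k:ℝ)/((k:ℝ)-1) := by
          rw [div_div_div_cancel_right₀]
          exact hnne
        rw [hba2, div_sub_one hk1ne]
        rw [show (k:ℝ) - ((k:ℝ)-1) = 1 by ring]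
        rw [div_le_iff₀ (by linarith : (0:ℝ) < (k:ℝ)-1)]
        rw [show 2 * (1/(k:ℝ)) * ((k:ℝ)-1) = 2*((k:ℝ)-1)/(k:ℝ) by ring]
        rw [le_div_iff₀ (by linarith : (0:ℝ) < (k:ℝ))]
        linarith
      have hG0 : 0 ≤ (n:ℝ)⁻¹ * betaDen α β ((k:ℝ)/n) := mul_nonneg hinv0 hfk0
      have hcoeff : Kα * (1 + Kβ) * (((k:ℝ)/n) / (((k:ℝ)-1)/n) - 1) + Kβ * (1/((n:ℝ) - k))
          ≤ A * (1/(k:ℝ) + 1/((n:ℝ) - k)) := by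
        have w0 : (0:ℝ) ≤ Kα * (1 + Kβ) := by positivity
        have c1 : Kα * (1 + Kβ) * (((k:ℝ)/n) / (((k:ℝ)-1)/n) - 1)
            ≤ Kα * (1 + Kβ) * (2 * (1/(k:ℝ))) := mul_le_mul_of_nonneg_left ht1b w0
        have c2 : (0:ℝ) ≤ Kβ * (1/(k:ℝ)) := mul_nonneg hKβ hinvk.le
        have c3 : (0:ℝ) ≤ Kα * (1 + Kβ) * (1/((n:ℝ) - k)) := mul_nonneg w0 hinvnk.le
        rw [hAdef]
        linarith only [c1, c2, c3]
      calc |(∫ x in (((k:ℝ)-1)/n)..((k:ℝ)/n), betaDen α β x) -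
            (n:ℝ)⁻¹ * betaDen α β ((k:ℝ)/n)| ≤
            (n:ℝ)⁻¹ * betaDen α β ((k:ℝ)/n) *
              (Kα * (1 + Kβ) * (((k:ℝ)/n) / (((k:ℝ)-1)/n) - 1) + Kβ * (1/((n:ℝ) - k))) := key
        _ ≤ (n:ℝ)⁻¹ * betaDen α β ((k:ℝ)/n) * (A * (1/(k:ℝ) + 1/((n:ℝ) - k))) :=
            mul_le_mul_of_nonneg_left hcoeff hG0
        _ = A * ((n:ℝ)⁻¹ * betaDen α β ((k:ℝ)/n) * (1/(k:ℝ) + 1/((n:ℝ) - k))) := by ring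
        _ ≤ (A + B + D + E) * ((n:ℝ)⁻¹ * betaDen α β ((k:ℝ)/n) * (1/(k:ℝ) + 1/((n:ℝ) - k))) := by
            apply mul_le_mul_of_nonneg_right (by linarith)
            exact mul_nonneg hG0 (by positivity)
        _ = (A + B + D + E) * (n:ℝ)⁻¹ * betaDen α β ((k:ℝ)/n) *
              (1/(k:ℝ) + 1/((n:ℝ) - k)) := by ring
  · -- second bullet
    intro n hn
    rcases eq_or_lt_of_le hn with h1 | h2
    · -- n = 1
      subst h1
      simp only [Nat.cast_one]
      rw [show (1:ℝ)/1 = 1 by norm_num, Real.one_rpow, mul_one]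
      have hIl : IntervalIntegrable (betaDen α β) volume 0 (1/2) :=
        betaDen_intble_left hα hβ (by norm_num) (le_refl _)
      have hsymmf : (fun x => betaDen β α (1 - x)) = betaDen α β :=
        funext fun x => (betaDen_symm α β x).symm
      have hIr : IntervalIntegrable (betaDen α β) volume (1/2) 1 := by
        have h := (betaDen_intble_left hβ hα (by norm_num : (0:ℝ) < 1/2)
          (le_refl _)).comp_sub_left 1
        rw [hsymmf] at h
        norm_num at h
        exact h.symm
      rw [← intervalIntegral.integral_add_adjacent_intervals hIl hIr]
      have hleft := betaDen_int_left hα hβ (by norm_num : (0:ℝ) < 1/2) (le_refl _)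
      rw [← hcdef, ← hQdef] at hleft
      have hright : (∫ x in (1/2:ℝ)..1, betaDen α β x) ≤
          Real.Gamma (β+α) / (Real.Gamma β * Real.Gamma α) * P / β * (1/2:ℝ) ^ β := by
        have h1 : (∫ x in (1/2:ℝ)..1, betaDen α β x) =
            ∫ x in (0:ℝ)..(1/2:ℝ), betaDen β α x := by
          conv_lhs => rw [← hsymmf]
          rw [intervalIntegral.integral_comp_sub_left (betaDen β α) 1]
          norm_num
        rw [h1]
        have h2 := betaDen_int_left hβ hα (by norm_num : (0:ℝ) < 1/2) (le_refl _)
        rwa [← hPdef] at h2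
      calc (∫ x in (0:ℝ)..(1/2:ℝ), betaDen α β x) + ∫ x in (1/2:ℝ)..1, betaDen α β x ≤
            c * Q / α * (1/2:ℝ) ^ α
              + Real.Gamma (β+α) / (Real.Gamma β * Real.Gamma α) * P / β * (1/2:ℝ) ^ β :=
            add_le_add hleft hright
        _ = E := by rw [hEdef]
        _ ≤ A + B + D + E := by linarith
    · -- n ≥ 2
      have hn2 : (2:ℝ) ≤ n := by exact_mod_cast h2
      have hn0 : (0:ℝ) < n := by linarith
      have ht0 : 0 < 1 / (n:ℝ) := by positivity
      have ht : 1 / (n:ℝ) ≤ 1/2 := by rw [div_le_div_iff₀ hn0 two_pos]; linarith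
      have hIle := betaDen_int_left hα hβ ht0 ht
      rw [← hcdef, ← hQdef] at hIle
      have hpow : ((1:ℝ)/(n:ℝ)) ^ α = (n:ℝ) ^ (-α) := by
        rw [one_div, Real.inv_rpow hn0.le, ← Real.rpow_neg hn0.le]
      rw [hpow] at hIle
      have hna : (0:ℝ) ≤ (n:ℝ) ^ (-α) := (Real.rpow_pos_of_pos hn0 _).le
      calc (∫ x in (0:ℝ)..(1/(n:ℝ)), betaDen α β x) ≤ c * Q / α * (n:ℝ) ^ (-α) := hIle
        _ = D * (n:ℝ) ^ (-α) := by rw [hDdef]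
        _ ≤ (A + B + D + E) * (n:ℝ) ^ (-α) :=
            mul_le_mul_of_nonneg_right (by linarith) hna
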